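/- Let Λ ⊆ Γ ⊆ Λ₀ be rings such that Γ/Λ is finite and Γ is a minimal overring of Λ (there is no ring strictly between Λ and Γ). Then there exists a minimal nonzero (Λ,Λ)-subbimodule M of Γ/Λ such that the Λ-subalgebra of Λ₀ generated by Λ and a lift of M equals Γ. -/

import Mathlib

/-!
A subbimodule `M` with `Λ ⊆ M` is a union of cosets of `Λ`, so, `Λ₀ ⧸ Λ` being finite, there are
only finitely many of them and a minimal one among those with `Λ ⊊ M ⊆ Γ` exists (`Γ` itself is
one). The subring generated by such an `M` lies strictly between `Λ` and `Γ` or equals `Γ`;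
minimality of `Γ` as an overring forces the latter.
-/

/-- A `(Λ,Λ)`-subbimodule of `Λ₀`: an additive subgroup closed under left and right
multiplication by elements of the subring `Λ`. -/
def IsSubbimodule {Λ₀ : Type*} [Ring Λ₀] (Λ : Subring Λ₀) (M : Set Λ₀) : Prop :=
  (0 : Λ₀) ∈ M ∧ (∀ x ∈ M, ∀ y ∈ M, x + y ∈ M) ∧ (∀ x ∈ M, -x ∈ M) ∧
    (∀ a ∈ Λ, ∀ x ∈ M, a * x ∈ M ∧ x * a ∈ M)

namespace QuotientAddGroup

variable {G : Type*} [AddGroup G] {H : AddSubgroup G}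

theorem preimage_image_mk_eq_self {s : Set G} (hH : (H : Set G) ⊆ s)
    (hs : ∀ x ∈ s, ∀ y ∈ s, x + y ∈ s) : mk ⁻¹' ((mk : G → G ⧸ H) '' s) = s := by
  rw [preimage_image_mk_eq_add]
  exact (Set.add_subset_iff.2 fun x hx y hy => hs x hx y (hH hy)).antisymm
    (Set.subset_add_left s H.zero_mem)

theorem finite_setOf_addClosed_superset [Finite (G ⧸ H)] :
    {s : Set G | (H : Set G) ⊆ s ∧ ∀ x ∈ s, ∀ y ∈ s, x + y ∈ s}.Finite :=
  (Set.finite_range fun t : Set (G ⧸ H) => mk ⁻¹' t).subset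
    fun _ ⟨hH, hs⟩ => ⟨_, preimage_image_mk_eq_self hH hs⟩

end QuotientAddGroup

section

variable {Λ₀ : Type*} [Ring Λ₀] {Λ Γ : Subring Λ₀}

theorem Subring.isSubbimodule_of_le (h : Λ ≤ Γ) : IsSubbimodule Λ (Γ : Set Λ₀) :=
  ⟨Γ.zero_mem, fun _ hx _ hy => Γ.add_mem hx hy, fun _ hx => Γ.neg_mem hx,
    fun _ ha _ hx => ⟨Γ.mul_mem (h ha) hx, Γ.mul_mem hx (h ha)⟩⟩

theorem exists_minimal_subbimodule_between [Finite (Λ₀ ⧸ Λ.toAddSubgroup)] (hlt : Λ < Γ) :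
    ∃ M : Set Λ₀,
      Minimal (fun N => IsSubbimodule Λ N ∧ (Λ : Set Λ₀) ⊂ N ∧ N ⊆ (Γ : Set Λ₀)) M := by
  have hfinite : {N : Set Λ₀ | IsSubbimodule Λ N ∧ (Λ : Set Λ₀) ⊂ N ∧ N ⊆ (Γ : Set Λ₀)}.Finite :=
    (QuotientAddGroup.finite_setOf_addClosed_superset (H := Λ.toAddSubgroup)).subset
      fun _ ⟨hN, hΛN, _⟩ => ⟨hΛN.subset, hN.2.1⟩
  exact hfinite.exists_minimal
    ⟨Γ, Subring.isSubbimodule_of_le hlt.le, SetLike.coe_ssubset_coe.2 hlt, le_rfl⟩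

theorem Subring.closure_eq_of_isMinimalOverring
    (hmin : ∀ Γ' : Subring Λ₀, Λ ≤ Γ' → Γ' ≤ Γ → Γ' = Λ ∨ Γ' = Γ)
    {M : Set Λ₀} (hΛM : (Λ : Set Λ₀) ⊂ M) (hMΓ : M ⊆ Γ) : Subring.closure M = Γ := by
  refine (hmin _ (fun x hx => subset_closure (hΛM.subset hx)) (closure_le.2 hMΓ)).resolve_left ?_
  intro hclosure
  obtain ⟨x, hxM, hxΛ⟩ := Set.exists_of_ssubset hΛM
  exact hxΛ (hclosure ▸ subset_closure hxM)

end

theorem statement3 {Λ₀ : Type*} [Ring Λ₀] (Λ Γ : Subring Λ₀)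
    (hfin : Finite (Λ₀ ⧸ Λ.toAddSubgroup))
    (hlt : Λ < Γ)
    (hmin : ∀ Γ' : Subring Λ₀, Λ ≤ Γ' → Γ' ≤ Γ → Γ' = Λ ∨ Γ' = Γ) :
    ∃ M : Set Λ₀, IsSubbimodule Λ M ∧ (Λ : Set Λ₀) ⊂ M ∧ M ⊆ (Γ : Set Λ₀) ∧
      (∀ N : Set Λ₀, IsSubbimodule Λ N → (Λ : Set Λ₀) ⊂ N → N ⊆ M → N = M) ∧
      Subring.closure M = Γ := by
  obtain ⟨M, hM⟩ := exists_minimal_subbimodule_between hlt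
  obtain ⟨hMsub, hΛM, hMΓ⟩ := hM.prop
  exact ⟨M, hMsub, hΛM, hMΓ,
    fun N hN hΛN hNM => hM.eq_of_subset ⟨hN, hΛN, hNM.trans hMΓ⟩ hNM,
    Subring.closure_eq_of_isMinimalOverring hmin hΛM hMΓ⟩
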